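/- Let X be a finite set, D a probability distribution on X × {0,1} with random pair (x, y), and p : X → [0,1] a predictor with recalibration p̂. Let T = (A, u) be a decision task with best-response function σ_T, and let φ : [0,1] → ℝ be a convex function with subgradient ∇φ satisfying u(σ_T(v), y) = φ(v) + ∇φ(v)·(y − v) for all v ∈ [0,1], y ∈ {0,1}. Then E[u(σ_T(p(x)), y)] = E[φ(p̂(x))] − E[D_φ(p̂(x) ‖ p(x))] and CFDL_T(p, D) = E[D_φ(p̂(x) ‖ p(x))]. -/
import Mathlib


open scoped Classical
open Finset Set

noncomputable section

/-- `D` is a probability distribution on `X × {0,1}` (labels as `Bool`). -/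
def IsDistribution {X : Type} [Fintype X] (D : X × Bool → ℝ) : Prop :=
  (∀ z, 0 ≤ D z) ∧ (∑ z : X × Bool, D z) = 1

/-- A predictor takes values in `[0,1]`. -/
def IsPredictor {X : Type} (p : X → ℝ) : Prop := ∀ x, p x ∈ Set.Icc (0 : ℝ) 1

/-- Numerical value of a Boolean label. -/
def yval (y : Bool) : ℝ := if y then 1 else 0

/-- Marginal mass of a point `x`. -/
def massx {X : Type} (D : X × Bool → ℝ) (x : X) : ℝ := D (x, false) + D (x, true)

/-- Expectation of `f(x, y)` under `D`. -/
def expval {X : Type} [Fintype X] (D : X × Bool → ℝ) (f : X × Bool → ℝ) : ℝ :=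
  ∑ z : X × Bool, D z * f z

/-- The recalibration `p̂(x) = E[y | p(x)]`. -/
def phat {X : Type} [Fintype X] (D : X × Bool → ℝ) (p : X → ℝ) (x : X) : ℝ :=
  (∑ x' : X, if p x' = p x then D (x', true) else 0) /
    (∑ x' : X, if p x' = p x then massx D x' else 0)

/-- `σT` is a best-response function for the decision task `(A, u)`. -/
def IsBestResponse {A : Type} (u : A → Bool → ℝ) (σT : ℝ → A) : Prop :=
  ∀ v ∈ Set.Icc (0 : ℝ) 1, ∀ a : A,
    v * u a true + (1 - v) * u a false ≤ v * u (σT v) true + (1 - v) * u (σT v) false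

/-- The expected payoff `E[u(σ(p(x)), y)]`. -/
def payoff {X A : Type} [Fintype X] (D : X × Bool → ℝ) (p : X → ℝ)
    (u : A → Bool → ℝ) (σ : ℝ → A) : ℝ :=
  expval D (fun z => u (σ (p z.1)) z.2)

/-- `CFDL_T(p, D) = max_σ E[u(σ(p(x)), y)] - E[u(σT(p(x)), y)]`. -/
def CFDL {X A : Type} [Fintype X] (D : X × Bool → ℝ) (p : X → ℝ)
    (u : A → Bool → ℝ) (σT : ℝ → A) : ℝ :=
  sSup {e : ℝ | ∃ σ : ℝ → A, e = payoff D p u σ} - payoff D p u σT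

/-- `g` is a subgradient of `φ` on `[0,1]`. -/
def IsSubgradientOn (φ g : ℝ → ℝ) : Prop :=
  ∀ v ∈ Set.Icc (0 : ℝ) 1, ∀ w ∈ Set.Icc (0 : ℝ) 1, φ v + g v * (w - v) ≤ φ w

/-- The Bregman divergence `D_φ(a ‖ b) = φ(a) - φ(b) - ∇φ(b)·(a - b)`. -/
def breg (φ g : ℝ → ℝ) (a b : ℝ) : ℝ := φ a - φ b - g b * (a - b)

namespace BregAux

variable {X : Type} [Fintype X]

def Nv (D : X × Bool → ℝ) (p : X → ℝ) (v : ℝ) : ℝ :=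
  ∑ x' : X, if p x' = v then D (x', true) else 0

def Fv (D : X × Bool → ℝ) (p : X → ℝ) (v : ℝ) : ℝ :=
  ∑ x' : X, if p x' = v then D (x', false) else 0

def Mv (D : X × Bool → ℝ) (p : X → ℝ) (v : ℝ) : ℝ :=
  ∑ x' : X, if p x' = v then massx D x' else 0

lemma phat_eq (D : X × Bool → ℝ) (p : X → ℝ) (x : X) :
    phat D p x = Nv D p (p x) / Mv D p (p x) := rfl

lemma Mv_eq (D : X × Bool → ℝ) (p : X → ℝ) (v : ℝ) :
    Mv D p v = Fv D p v + Nv D p v := by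
  unfold Mv Fv Nv
  rw [← Finset.sum_add_distrib]
  exact Finset.sum_congr rfl fun x _ => by unfold massx; split <;> simp

variable {D : X × Bool → ℝ} (hD0 : ∀ z, 0 ≤ D z) (p : X → ℝ)

include hD0

lemma Nv_nonneg (v : ℝ) : 0 ≤ Nv D p v := by
  refine Finset.sum_nonneg fun x _ => ?_
  split
  · exact hD0 _
  · exact le_refl 0

lemma Fv_nonneg (v : ℝ) : 0 ≤ Fv D p v := by
  refine Finset.sum_nonneg fun x _ => ?_
  split
  · exact hD0 _
  · exact le_refl 0

lemma Nv_le_Mv (v : ℝ) : Nv D p v ≤ Mv D p v := by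
  have := Fv_nonneg hD0 p v
  rw [Mv_eq]; linarith

lemma Mv_nonneg (v : ℝ) : 0 ≤ Mv D p v :=
  le_trans (Nv_nonneg hD0 p v) (Nv_le_Mv hD0 p v)

lemma Nv_eq (v : ℝ) : Nv D p v = (Nv D p v / Mv D p v) * Mv D p v := by
  by_cases hM : Mv D p v = 0
  · have h0 : Nv D p v = 0 :=
      le_antisymm (hM ▸ Nv_le_Mv hD0 p v) (Nv_nonneg hD0 p v)
    simp [h0, hM]
  · rw [div_mul_cancel₀ _ hM]

lemma tau_mem (v : ℝ) : Nv D p v / Mv D p v ∈ Set.Icc (0 : ℝ) 1 := by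
  by_cases hM : Mv D p v = 0
  · simp [hM]
  · have hMpos : 0 < Mv D p v := lt_of_le_of_ne (Mv_nonneg hD0 p v) (Ne.symm hM)
    exact ⟨div_nonneg (Nv_nonneg hD0 p v) (Mv_nonneg hD0 p v),
      (div_le_one hMpos).mpr (Nv_le_Mv hD0 p v)⟩

lemma phat_mem (x : X) : phat D p x ∈ Set.Icc (0 : ℝ) 1 := by
  rw [phat_eq]; exact tau_mem hD0 p (p x)

lemma fiber_sum (h : ℝ → ℝ) :
    ∑ x : X, massx D x * (h (p x) * phat D p x) = ∑ x : X, D (x, true) * h (p x) := by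
  have hmaps : ∀ x ∈ Finset.univ, p x ∈ Finset.univ.image p :=
    fun x _ => Finset.mem_image_of_mem p (Finset.mem_univ x)
  rw [← Finset.sum_fiberwise_of_maps_to hmaps (fun x => massx D x * (h (p x) * phat D p x)),
      ← Finset.sum_fiberwise_of_maps_to hmaps (fun x => D (x, true) * h (p x))]
  refine Finset.sum_congr rfl fun v _ => ?_
  have h1 : ∑ x ∈ Finset.univ with p x = v, massx D x * (h (p x) * phat D p x)
      = Mv D p v * (h v * (Nv D p v / Mv D p v)) := by
    calc ∑ x ∈ Finset.univ with p x = v, massx D x * (h (p x) * phat D p x)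
        = ∑ x ∈ Finset.univ with p x = v, massx D x * (h v * (Nv D p v / Mv D p v)) := by
          refine Finset.sum_congr rfl fun x hx => ?_
          have hpx : p x = v := (Finset.mem_filter.mp hx).2
          rw [phat_eq, hpx]
      _ = (∑ x ∈ Finset.univ with p x = v, massx D x) * (h v * (Nv D p v / Mv D p v)) := by
          rw [← Finset.sum_mul]
      _ = Mv D p v * (h v * (Nv D p v / Mv D p v)) := by
          rw [Finset.sum_filter]; rfl
  have h2 : ∑ x ∈ Finset.univ with p x = v, D (x, true) * h (p x)
      = Nv D p v * h v := by
    calc ∑ x ∈ Finset.univ with p x = v, D (x, true) * h (p x)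
        = ∑ x ∈ Finset.univ with p x = v, D (x, true) * h v := by
          refine Finset.sum_congr rfl fun x hx => ?_
          rw [(Finset.mem_filter.mp hx).2]
      _ = (∑ x ∈ Finset.univ with p x = v, D (x, true)) * h v := by
          rw [← Finset.sum_mul]
      _ = Nv D p v * h v := by rw [Finset.sum_filter]; rfl
  rw [h1, h2]
  by_cases hM : Mv D p v = 0
  · have h0 : Nv D p v = 0 :=
      le_antisymm (hM ▸ Nv_le_Mv hD0 p v) (Nv_nonneg hD0 p v)
    rw [hM, h0]; ring
  · field_simp

omit hD0

lemma sum_fiber_eq (q : X → ℝ) (r : ℝ → ℝ) (v : ℝ) :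
    ∑ x ∈ Finset.univ with p x = v, q x * r (p x)
      = (∑ x' : X, if p x' = v then q x' else 0) * r v := by
  calc ∑ x ∈ Finset.univ with p x = v, q x * r (p x)
      = ∑ x ∈ Finset.univ with p x = v, q x * r v :=
        Finset.sum_congr rfl fun x hx => by rw [(Finset.mem_filter.mp hx).2]
    _ = (∑ x ∈ Finset.univ with p x = v, q x) * r v := by rw [← Finset.sum_mul]
    _ = _ := by rw [Finset.sum_filter]

lemma expval_eq (f : X × Bool → ℝ) :
    expval D f = ∑ x : X, (D (x, false) * f (x, false) + D (x, true) * f (x, true)) := by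
  unfold expval
  rw [Fintype.sum_prod_type]
  exact Finset.sum_congr rfl fun x _ => by rw [Fintype.sum_bool]; ring

end BregAux

/-- Bregman divergence view of the CFDL: if
`u(σT(v), y) = φ(v) + ∇φ(v)·(y - v)` on `[0,1] × {0,1}` for a convex `φ` with
subgradient `∇φ`, then `E[u(σT(p(x)), y)] = E[φ(p̂(x))] - E[D_φ(p̂(x) ‖ p(x))]` and
`CFDL_T(p, D) = E[D_φ(p̂(x) ‖ p(x))]`. -/
theorem payoff_and_cfdl_via_bregman
    {X : Type} [Fintype X] (D : X × Bool → ℝ) (hD : IsDistribution D)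
    (p : X → ℝ) (hp : IsPredictor p)
    (A : Type) (u : A → Bool → ℝ) (σT : ℝ → A) (hBR : IsBestResponse u σT)
    (φ g : ℝ → ℝ) (hconv : ConvexOn ℝ (Set.Icc (0 : ℝ) 1) φ)
    (hsub : IsSubgradientOn φ g)
    (hid : ∀ v ∈ Set.Icc (0 : ℝ) 1, ∀ y : Bool,
      u (σT v) y = φ v + g v * (yval y - v)) :
    payoff D p u σT =
        (∑ x : X, massx D x * φ (phat D p x)) -
          (∑ x : X, massx D x * breg φ g (phat D p x) (p x)) ∧
      CFDL D p u σT = ∑ x : X, massx D x * breg φ g (phat D p x) (p x) := by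
  obtain ⟨hD0, -⟩ := hD
  have e1 : payoff D p u σT
      = ∑ x : X, (massx D x * (φ (p x) - g (p x) * p x) + D (x, true) * g (p x)) := by
    unfold payoff
    rw [BregAux.expval_eq]
    refine Finset.sum_congr rfl fun x _ => ?_
    rw [hid (p x) (hp x) true, hid (p x) (hp x) false]
    simp only [yval, massx, Bool.false_eq_true, if_false, if_true]
    ring
  have part1 : payoff D p u σT =
      (∑ x : X, massx D x * φ (phat D p x)) -
        (∑ x : X, massx D x * breg φ g (phat D p x) (p x)) := by
    rw [e1, ← Finset.sum_sub_distrib]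
    have e3 := BregAux.fiber_sum hD0 p g
    calc ∑ x : X, (massx D x * (φ (p x) - g (p x) * p x) + D (x, true) * g (p x))
        = (∑ x : X, massx D x * (φ (p x) - g (p x) * p x))
            + ∑ x : X, D (x, true) * g (p x) := Finset.sum_add_distrib
      _ = (∑ x : X, massx D x * (φ (p x) - g (p x) * p x))
            + ∑ x : X, massx D x * (g (p x) * phat D p x) := by rw [e3]
      _ = ∑ x : X, (massx D x * φ (phat D p x)
            - massx D x * breg φ g (phat D p x) (p x)) := by
          rw [← Finset.sum_add_distrib]
          refine Finset.sum_congr rfl fun x _ => ?_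
          unfold breg
          ring
  obtain ⟨σstar, hστ⟩ : ∃ σs : ℝ → A, ∀ x : X, σs (p x) = σT (phat D p x) :=
    ⟨fun v => σT (BregAux.Nv D p v / BregAux.Mv D p v), fun x => rfl⟩
  have estar : payoff D p u σstar = ∑ x : X, massx D x * φ (phat D p x) := by
    unfold payoff
    rw [BregAux.expval_eq]
    have e4 := BregAux.fiber_sum hD0 p (fun v => g (BregAux.Nv D p v / BregAux.Mv D p v))
    simp only [← BregAux.phat_eq D p] at e4
    calc ∑ x : X, (D (x, false) * u (σstar (p x)) false + D (x, true) * u (σstar (p x)) true)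
        = ∑ x : X, (massx D x * (φ (phat D p x) - g (phat D p x) * phat D p x)
            + D (x, true) * g (phat D p x)) := by
          refine Finset.sum_congr rfl fun x _ => ?_
          rw [hστ x, hid (phat D p x) (BregAux.phat_mem hD0 p x) true,
              hid (phat D p x) (BregAux.phat_mem hD0 p x) false]
          simp only [yval, massx, Bool.false_eq_true, if_false, if_true]
          ring
      _ = (∑ x : X, massx D x * (φ (phat D p x) - g (phat D p x) * phat D p x))
            + ∑ x : X, D (x, true) * g (phat D p x) := Finset.sum_add_distrib
      _ = (∑ x : X, massx D x * (φ (phat D p x) - g (phat D p x) * phat D p x))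
            + ∑ x : X, massx D x * (g (phat D p x) * phat D p x) := by rw [← e4]
      _ = ∑ x : X, massx D x * φ (phat D p x) := by
          rw [← Finset.sum_add_distrib]
          exact Finset.sum_congr rfl fun x _ => by ring
  have hub : ∀ σ : ℝ → A, payoff D p u σ ≤ ∑ x : X, massx D x * φ (phat D p x) := by
    intro σ
    unfold payoff
    rw [BregAux.expval_eq]
    have hmaps : ∀ x ∈ Finset.univ, p x ∈ Finset.univ.image p :=
      fun x _ => Finset.mem_image_of_mem p (Finset.mem_univ x)
    rw [← Finset.sum_fiberwise_of_maps_to hmaps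
        (fun x => D (x, false) * u (σ (p x)) false + D (x, true) * u (σ (p x)) true),
        ← Finset.sum_fiberwise_of_maps_to hmaps (fun x => massx D x * φ (phat D p x))]
    refine Finset.sum_le_sum fun v _ => ?_
    set t := BregAux.Nv D p v / BregAux.Mv D p v with ht
    have htm := BregAux.tau_mem hD0 p v
    have hL : ∑ x ∈ Finset.univ with p x = v,
        (D (x, false) * u (σ (p x)) false + D (x, true) * u (σ (p x)) true)
        = BregAux.Fv D p v * u (σ v) false + BregAux.Nv D p v * u (σ v) true := by
      rw [Finset.sum_add_distrib,
        BregAux.sum_fiber_eq p (fun x => D (x, false)) (fun w => u (σ w) false) v,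
        BregAux.sum_fiber_eq p (fun x => D (x, true)) (fun w => u (σ w) true) v]
      rfl
    have hR : ∑ x ∈ Finset.univ with p x = v, massx D x * φ (phat D p x)
        = BregAux.Mv D p v * φ t :=
      BregAux.sum_fiber_eq p (massx D)
        (fun w => φ (BregAux.Nv D p w / BregAux.Mv D p w)) v
    rw [hL, hR]
    have hNt : BregAux.Nv D p v = t * BregAux.Mv D p v := BregAux.Nv_eq hD0 p v
    have hFt : BregAux.Fv D p v = (1 - t) * BregAux.Mv D p v := by
      have h := BregAux.Mv_eq D p v
      rw [hNt] at h
      linear_combination -h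
    have hφt : t * u (σT t) true + (1 - t) * u (σT t) false = φ t := by
      rw [hid t htm true, hid t htm false]
      simp only [yval, Bool.false_eq_true, if_false, if_true]
      ring
    calc BregAux.Fv D p v * u (σ v) false + BregAux.Nv D p v * u (σ v) true
        = BregAux.Mv D p v * (t * u (σ v) true + (1 - t) * u (σ v) false) := by
          rw [hNt, hFt]; ring
      _ ≤ BregAux.Mv D p v * (t * u (σT t) true + (1 - t) * u (σT t) false) :=
          mul_le_mul_of_nonneg_left (hBR t htm (σ v)) (BregAux.Mv_nonneg hD0 p v)
      _ = BregAux.Mv D p v * φ t := by rw [hφt]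
  have hmemstar : payoff D p u σstar ∈ {e : ℝ | ∃ σ : ℝ → A, e = payoff D p u σ} :=
    ⟨σstar, rfl⟩
  have hubS : ∀ e ∈ {e : ℝ | ∃ σ : ℝ → A, e = payoff D p u σ}, e ≤ payoff D p u σstar := by
    rintro e ⟨σ, rfl⟩
    rw [estar]
    exact hub σ
  have hsup : sSup {e : ℝ | ∃ σ : ℝ → A, e = payoff D p u σ} = payoff D p u σstar :=
    le_antisymm (csSup_le ⟨_, hmemstar⟩ hubS) (le_csSup ⟨_, hubS⟩ hmemstar)
  refine ⟨part1, ?_⟩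
  unfold CFDL
  rw [hsup, estar, part1]
  ring
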